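/- Let f ∈ L¹(ℝ^d) and set ω_{ε,ξ₀}(x) = e^{ix·ξ₀} ε^d χ(εx) where χ is Schwartz with ∫χ = 1. Then sup_{ξ₀∈ℝ^d} ‖f ∗ ω_{ε,ξ₀} − f̂(ξ₀) ω_{ε,ξ₀}‖_{L¹} → 0 as ε → 0. -/

import Mathlib

/-!
Since `f̂(ξ₀) ω(x) = ∫ f(y) e^{-iy·ξ₀} ω(x) dy`, the phases combine and
`|f ∗ ω(x) − f̂(ξ₀) ω(x)| ≤ ∫ |f(y)| ε^d |χ(ε(x − y)) − χ(εx)| dy`, with no trace of `ξ₀` left.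
Integrating in `x` and rescaling bounds the `L¹` norm, uniformly in `ξ₀`, by
`∫ |f(y)| ‖χ(· − εy) − χ‖₁ dy`. This tends to `0` by continuity of translation in `L¹` and
dominated convergence, the integrand being at most `2 ‖χ‖₁ |f(y)|`.
-/

open MeasureTheory Filter Complex
open scoped ENNReal NNReal Topology RealInnerProductSpace SchwartzMap

noncomputable section

variable {d : ℕ}

/-- The modulated rescaled bump `ω_{ε,ξ₀}(x) = e^{ix·ξ₀} ε^d χ(εx)`. -/
def modBump (d : ℕ) (χ : 𝓢(EuclideanSpace ℝ (Fin d), ℂ)) (ε : ℝ) (ξ₀ x : EuclideanSpace ℝ (Fin d)) : ℂ :=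
  Complex.exp (Complex.I * (⟪x, ξ₀⟫ : ℝ)) * (ε ^ d : ℝ) * χ (ε • x)

/-- The Fourier transform `f̂(ξ₀) = ∫ e^{-iy·ξ₀} f(y) dy`. -/
def hatF (d : ℕ) (f : EuclideanSpace ℝ (Fin d) → ℂ) (ξ₀ : EuclideanSpace ℝ (Fin d)) : ℂ :=
  ∫ y, Complex.exp (-Complex.I * (⟪y, ξ₀⟫ : ℝ)) * f y

section Translation

variable {E F : Type*} [NormedAddCommGroup E] [NormedAddCommGroup F]

def l1TranslationModulus [MeasurableSpace E] (g : E → F) (μ : Measure E) (v : E) : ℝ≥0∞ :=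
  ∫⁻ z, ‖g (z - v) - g z‖ₑ ∂μ

variable [MeasurableSpace E] [BorelSpace E] {g : E → F} {μ : Measure E}

theorem measurable_l1TranslationModulus [SecondCountableTopology E] [SFinite μ]
    (hg : Continuous g) : Measurable (l1TranslationModulus g μ) :=
  Measurable.lintegral_prod_right'
    (by fun_prop : Continuous fun p : E × E => ‖g (p.2 - p.1) - g p.2‖ₑ).measurable

theorem l1TranslationModulus_le [μ.IsAddRightInvariant] (hg : AEStronglyMeasurable g μ) (v : E) :
    l1TranslationModulus g μ v ≤ 2 * ∫⁻ z, ‖g z‖ₑ ∂μ :=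
  calc l1TranslationModulus g μ v ≤ ∫⁻ z, (‖g (z - v)‖ₑ + ‖g z‖ₑ) ∂μ :=
        lintegral_mono fun z => enorm_sub_le
    _ = 2 * ∫⁻ z, ‖g z‖ₑ ∂μ := by
        rw [lintegral_add_right' _ hg.enorm, lintegral_sub_right_eq_self (fun z => ‖g z‖ₑ) v,
          two_mul]

end Translation

namespace SchwartzMap

variable {E F : Type*} [NormedAddCommGroup E] [NormedSpace ℝ E] [NormedAddCommGroup F]
  [NormedSpace ℝ F]

theorem exists_norm_comp_sub_le_one_add_norm_rpow (χ : 𝓢(E, F)) (k : ℕ) :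
    ∃ C, ∀ z v : E, ‖v‖ ≤ 1 → ‖χ (z - v)‖ ≤ C * (1 + ‖z‖) ^ (-(k : ℝ)) := by
  set S := 2 ^ k * (Finset.Iic (k, 0)).sup (fun m => SchwartzMap.seminorm ℝ m.1 m.2) χ
  refine ⟨2 ^ k * S, fun z v hv => ?_⟩
  have hχ : (1 + ‖z - v‖) ^ k * ‖χ (z - v)‖ ≤ S := by
    simpa using one_add_le_sup_seminorm_apply (𝕜 := ℝ) (m := (k, 0)) le_rfl le_rfl χ (z - v)
  have hz : 1 + ‖z‖ ≤ 2 * (1 + ‖z - v‖) := by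
    linarith [norm_sub_norm_le z v, norm_nonneg (z - v)]
  rw [Real.rpow_neg (by positivity), Real.rpow_natCast, ← div_eq_mul_inv,
    le_div_iff₀ (by positivity)]
  calc ‖χ (z - v)‖ * (1 + ‖z‖) ^ k ≤ ‖χ (z - v)‖ * (2 * (1 + ‖z - v‖)) ^ k := by gcongr
    _ = 2 ^ k * ((1 + ‖z - v‖) ^ k * ‖χ (z - v)‖) := by rw [mul_pow]; ring
    _ ≤ 2 ^ k * S := by gcongr

theorem tendsto_l1TranslationModulus [FiniteDimensional ℝ E] [MeasurableSpace E] [BorelSpace E]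
    (μ : Measure E) [μ.IsAddHaarMeasure] (χ : 𝓢(E, F)) :
    Tendsto (l1TranslationModulus χ μ) (𝓝 0) (𝓝 0) := by
  obtain ⟨C, hC⟩ := χ.exists_norm_comp_sub_le_one_add_norm_rpow (Module.finrank ℝ E + 1)
  set r : ℝ := ((Module.finrank ℝ E + 1 : ℕ) : ℝ)
  set bound : E → ℝ≥0∞ := fun z => ENNReal.ofReal (2 * C * (1 + ‖z‖) ^ (-r))
  have h_bound : ∀ v : E, ‖v‖ ≤ 1 → ∀ z, ‖χ (z - v) - χ z‖ₑ ≤ bound z := fun v hv z => by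
    rw [← ofReal_norm]
    refine ENNReal.ofReal_le_ofReal ((norm_sub_le _ _).trans ?_)
    linarith [hC z v hv, sub_zero z ▸ hC z 0 (by simp)]
  have h_fin : ∫⁻ z, bound z ∂μ ≠ ∞ :=
    ((integrable_one_add_norm (μ := μ) (by simp [r])).const_mul (2 * C)).lintegral_lt_top.ne
  have h_lim : ∀ z, Tendsto (fun v => ‖χ (z - v) - χ z‖ₑ) (𝓝 0) (𝓝 0) := fun z =>
    (by fun_prop : Continuous fun v => ‖χ (z - v) - χ z‖ₑ).tendsto' 0 0 (by simp)
  unfold l1TranslationModulus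
  simpa using tendsto_lintegral_filter_of_dominated_convergence bound
    (Eventually.of_forall fun v => (by fun_prop : Continuous _).measurable)
    (eventually_of_mem (Metric.closedBall_mem_nhds 0 one_pos) fun v hv =>
      ae_of_all _ (h_bound v (mem_closedBall_zero_iff.mp hv)))
    h_fin (ae_of_all _ h_lim)

end SchwartzMap

section Dilation

variable {E F : Type*} [NormedAddCommGroup E] [NormedSpace ℝ E] [MeasurableSpace E]
  [BorelSpace E]

theorem ofReal_pow_finrank_mul_lintegral_comp_smul [FiniteDimensional ℝ E] (μ : Measure E)
    [μ.IsAddHaarMeasure] {g : E → ℝ≥0∞} (hg : Measurable g) {ε : ℝ} (hε : 0 < ε) :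
    ENNReal.ofReal (ε ^ Module.finrank ℝ E) * ∫⁻ x, g (ε • x) ∂μ = ∫⁻ x, g x ∂μ := by
  rw [← lintegral_map hg (measurable_const_smul ε), Measure.map_addHaar_smul μ hε.ne',
    lintegral_smul_measure, smul_eq_mul, ← mul_assoc, ← ENNReal.ofReal_mul (by positivity),
    abs_of_pos (by positivity), mul_inv_cancel₀ (by positivity), ENNReal.ofReal_one, one_mul]

theorem tendsto_lintegral_enorm_mul_comp_smul [NormedAddCommGroup F] {μ : Measure E} {f : E → F}
    (hf : Integrable f μ) {T : E → ℝ≥0∞} (hT : Measurable T) {B : ℝ≥0∞} (hB : B ≠ ∞)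
    (hTB : ∀ v, T v ≤ B) (hT0 : Tendsto T (𝓝 0) (𝓝 0)) :
    Tendsto (fun ε : ℝ => ∫⁻ y, ‖f y‖ₑ * T (ε • y) ∂μ) (𝓝 0) (𝓝 0) := by
  have h_lim : ∀ y, Tendsto (fun ε : ℝ => ‖f y‖ₑ * T (ε • y)) (𝓝 0) (𝓝 0) := fun y => by
    simpa using ENNReal.Tendsto.const_mul
      (hT0.comp ((continuous_id.smul continuous_const).tendsto' 0 0 (zero_smul ℝ y)))
      (Or.inr enorm_ne_top)
  have h_fin : ∫⁻ y, ‖f y‖ₑ * B ∂μ ≠ ∞ := by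
    rw [lintegral_mul_const' _ _ hB]
    exact ENNReal.mul_ne_top hf.2.ne hB
  simpa using tendsto_lintegral_filter_of_dominated_convergence' (fun y => ‖f y‖ₑ * B)
    (Eventually.of_forall fun ε => hf.1.enorm.mul (hT.comp (measurable_const_smul ε)).aemeasurable)
    (Eventually.of_forall fun ε => ae_of_all _ fun y => mul_le_mul_right (hTB _) _)
    h_fin (ae_of_all _ h_lim)

end Dilation

@[fun_prop]
theorem continuous_modBump (χ : 𝓢(EuclideanSpace ℝ (Fin d), ℂ)) (ε : ℝ)
    (ξ₀ : EuclideanSpace ℝ (Fin d)) : Continuous (modBump d χ ε ξ₀) := by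
  unfold modBump
  fun_prop

theorem exists_norm_modBump_le (χ : 𝓢(EuclideanSpace ℝ (Fin d), ℂ)) (ε : ℝ)
    (ξ₀ : EuclideanSpace ℝ (Fin d)) : ∃ C, ∀ x, ‖modBump d χ ε ξ₀ x‖ ≤ C := by
  obtain ⟨M, -, hM⟩ := χ.decay 0 0
  refine ⟨|ε ^ d| * M, fun x => ?_⟩
  have hχ : ‖χ (ε • x)‖ ≤ M := by simpa using hM (ε • x)
  simp only [modBump, norm_mul, norm_exp_I_mul_ofReal, one_mul, Complex.norm_real,
    Real.norm_eq_abs]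
  gcongr

theorem enorm_modBump_sub_exp_mul_modBump (χ : 𝓢(EuclideanSpace ℝ (Fin d), ℂ)) {ε : ℝ}
    (hε : 0 ≤ ε) (ξ₀ x y : EuclideanSpace ℝ (Fin d)) :
    ‖modBump d χ ε ξ₀ (x - y) - Complex.exp (-Complex.I * (⟪y, ξ₀⟫ : ℝ)) * modBump d χ ε ξ₀ x‖ₑ
      = ENNReal.ofReal (ε ^ d) * ‖χ (ε • x - ε • y) - χ (ε • x)‖ₑ := by
  have h : modBump d χ ε ξ₀ (x - y) - Complex.exp (-Complex.I * (⟪y, ξ₀⟫ : ℝ)) * modBump d χ ε ξ₀ x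
      = Complex.exp (Complex.I * (⟪x - y, ξ₀⟫ : ℝ)) *
        (((ε ^ d : ℝ) : ℂ) * (χ (ε • x - ε • y) - χ (ε • x))) := by
    have hexp : Complex.exp (-Complex.I * (⟪y, ξ₀⟫ : ℝ)) * Complex.exp (Complex.I * (⟪x, ξ₀⟫ : ℝ))
        = Complex.exp (Complex.I * (⟪x - y, ξ₀⟫ : ℝ)) := by
      rw [← Complex.exp_add, inner_sub_left, Complex.ofReal_sub]
      ring_nf
    simp only [modBump, smul_sub]
    linear_combination (-(((ε ^ d : ℝ) : ℂ) * χ (ε • x))) * hexp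
  rw [h, enorm_mul, enorm_exp_I_mul_ofReal, one_mul, enorm_mul, ← ofReal_norm (_ : ℂ),
    Complex.norm_real, Real.norm_of_nonneg (by positivity)]

theorem conv_modBump_sub_hatF_mul_modBump {f : EuclideanSpace ℝ (Fin d) → ℂ}
    (hf : Integrable f) (χ : 𝓢(EuclideanSpace ℝ (Fin d), ℂ)) (ε : ℝ)
    (ξ₀ x : EuclideanSpace ℝ (Fin d)) :
    (∫ y, f y * modBump d χ ε ξ₀ (x - y)) - hatF d f ξ₀ * modBump d χ ε ξ₀ x
      = ∫ y, f y * (modBump d χ ε ξ₀ (x - y)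
          - Complex.exp (-Complex.I * (⟪y, ξ₀⟫ : ℝ)) * modBump d χ ε ξ₀ x) := by
  obtain ⟨C, hC⟩ := exists_norm_modBump_le χ ε ξ₀
  have h_conv : Integrable (fun y => f y * modBump d χ ε ξ₀ (x - y)) :=
    hf.mul_bdd (by fun_prop : Continuous fun y => modBump d χ ε ξ₀ (x - y)).aestronglyMeasurable
      (ae_of_all _ fun y => hC (x - y))
  have h_hat : Integrable
      (fun y => Complex.exp (-Complex.I * (⟪y, ξ₀⟫ : ℝ)) * f y * modBump d χ ε ξ₀ x) :=
    (hf.bdd_mul (by fun_prop) (c := 1)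
      (ae_of_all _ fun y => by simp [Complex.norm_exp])).mul_const _
  rw [hatF, ← integral_mul_const, ← integral_sub h_conv h_hat]
  congr 1 with y
  ring

theorem lintegral_enorm_conv_modBump_sub_le {f : EuclideanSpace ℝ (Fin d) → ℂ}
    (hf : Integrable f) (χ : 𝓢(EuclideanSpace ℝ (Fin d), ℂ)) {ε : ℝ} (hε : 0 < ε)
    (ξ₀ : EuclideanSpace ℝ (Fin d)) :
    ∫⁻ x, ‖(∫ y, f y * modBump d χ ε ξ₀ (x - y)) - hatF d f ξ₀ * modBump d χ ε ξ₀ x‖ₑ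
      ≤ ∫⁻ y, ‖f y‖ₑ * l1TranslationModulus χ volume (ε • y) := by
  have h_scale : ∀ y, ENNReal.ofReal (ε ^ d) * ∫⁻ x, ‖χ (ε • x - ε • y) - χ (ε • x)‖ₑ
      = l1TranslationModulus χ volume (ε • y) := fun y => by
    simpa [finrank_euclideanSpace_fin, l1TranslationModulus] using
      ofReal_pow_finrank_mul_lintegral_comp_smul volume
        (g := fun z => ‖χ (z - ε • y) - χ z‖ₑ) (by fun_prop) hε
  calc ∫⁻ x, ‖(∫ y, f y * modBump d χ ε ξ₀ (x - y)) - hatF d f ξ₀ * modBump d χ ε ξ₀ x‖ₑ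
      ≤ ∫⁻ x, ∫⁻ y, ‖f y‖ₑ * (ENNReal.ofReal (ε ^ d) * ‖χ (ε • x - ε • y) - χ (ε • x)‖ₑ) := by
        refine lintegral_mono fun x => ?_
        rw [conv_modBump_sub_hatF_mul_modBump hf]
        refine (enorm_integral_le_lintegral_enorm _).trans_eq ?_
        simp only [enorm_mul, enorm_modBump_sub_exp_mul_modBump χ hε.le]
    _ = ∫⁻ y, ∫⁻ x, ‖f y‖ₑ * (ENNReal.ofReal (ε ^ d) * ‖χ (ε • x - ε • y) - χ (ε • x)‖ₑ) :=
        lintegral_lintegral_swap <| hf.1.enorm.comp_snd.mul <| Measurable.aemeasurable <| by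
          fun_prop
    _ = ∫⁻ y, ‖f y‖ₑ * l1TranslationModulus χ volume (ε • y) := by
        simp only [lintegral_const_mul' _ _ enorm_ne_top,
          lintegral_const_mul' _ _ ENNReal.ofReal_ne_top, h_scale]

theorem modulated_approximate_identity_general
    (f : EuclideanSpace ℝ (Fin d) → ℂ) (hf : Integrable f (volume : Measure (EuclideanSpace ℝ (Fin d))))
    (χ : 𝓢(EuclideanSpace ℝ (Fin d), ℂ)) :
    Tendsto
      (fun ε : ℝ => ⨆ ξ₀ : EuclideanSpace ℝ (Fin d),
        ∫⁻ x, (‖(∫ y, f y * modBump d χ ε ξ₀ (x - y)) - hatF d f ξ₀ * modBump d χ ε ξ₀ x‖₊ : ℝ≥0∞))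
      (𝓝[>] (0 : ℝ)) (𝓝 0) := by
  have h_bound : Tendsto (fun ε : ℝ => ∫⁻ y, ‖f y‖ₑ * l1TranslationModulus χ volume (ε • y))
      (𝓝 0) (𝓝 0) :=
    tendsto_lintegral_enorm_mul_comp_smul hf (measurable_l1TranslationModulus χ.continuous)
      (ENNReal.mul_ne_top ENNReal.ofNat_ne_top χ.integrable.2.ne)
      (l1TranslationModulus_le χ.continuous.aestronglyMeasurable)
      (χ.tendsto_l1TranslationModulus volume)
  refine tendsto_of_tendsto_of_tendsto_of_le_of_le' tendsto_const_nhds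
    (h_bound.mono_left nhdsWithin_le_nhds) (Eventually.of_forall fun ε => zero_le) ?_
  filter_upwards [self_mem_nhdsWithin] with ε hε
  exact iSup_le (lintegral_enorm_conv_modBump_sub_le hf χ hε)

/-- For `f ∈ L¹(ℝ^d)` and a Schwartz bump `χ` with `∫ χ = 1`,
`sup_{ξ₀} ‖f ∗ ω_{ε,ξ₀} − f̂(ξ₀) ω_{ε,ξ₀}‖_{L¹} → 0` as `ε → 0⁺`. -/
theorem modulated_approximate_identity
    (f : EuclideanSpace ℝ (Fin d) → ℂ) (hf : Integrable f (volume : Measure (EuclideanSpace ℝ (Fin d))))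
    (χ : 𝓢(EuclideanSpace ℝ (Fin d), ℂ)) (hχ : ∫ x, χ x = 1) :
    Tendsto
      (fun ε : ℝ => ⨆ ξ₀ : EuclideanSpace ℝ (Fin d),
        ∫⁻ x, (‖(∫ y, f y * modBump d χ ε ξ₀ (x - y)) - hatF d f ξ₀ * modBump d χ ε ξ₀ x‖₊ : ℝ≥0∞))
      (𝓝[>] (0 : ℝ)) (𝓝 0) :=
  modulated_approximate_identity_general f hf χ

end
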